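/- The stabilizer subgroup {g ∈ PGL(3,k) : g(P²(F₄)) = P²(F₄)} of the 21-point set P²(F₄) under the natural action of PGL(3,k) on P²(k) is equal to the image of GL(3,F₄) in PGL(3,k), i.e. to PGL(3,F₄). -/

import Mathlib

/-- The natural action of an invertible matrix `g ∈ GL(3,k)` on the projective plane
`P²(k)`. -/
noncomputable def actGL (k : Type*) [Field k] (g : Matrix.GeneralLinearGroup (Fin 3) k) :
    Projectivization k (Fin 3 → k) → Projectivization k (Fin 3 → k) := fun P =>
  Projectivization.mk k ((g : Matrix (Fin 3) (Fin 3) k).mulVec P.rep) (by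
    intro h
    apply P.rep_nonzero
    have h2 : ((g⁻¹ : Matrix.GeneralLinearGroup (Fin 3) k) : Matrix (Fin 3) (Fin 3) k).mulVec
        (((g : Matrix (Fin 3) (Fin 3) k)).mulVec P.rep) = P.rep := by
      rw [Matrix.mulVec_mulVec, g.inv_mul, Matrix.one_mulVec]
    rw [h, Matrix.mulVec_zero] at h2
    exact h2.symm)

/-- `PGL(3,k)`: the quotient of `GL(3,k)` by its center (the nonzero scalar matrices). -/
abbrev PGL3 (k : Type*) [Field k] : Type _ :=
  Matrix.GeneralLinearGroup (Fin 3) k ⧸ Subgroup.center (Matrix.GeneralLinearGroup (Fin 3) k)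

/-- The set `P²(F₄)` of points of `P²(k)` admitting homogeneous coordinates all lying in
the four-element subfield `F₄ = {0, 1, ω, ω+1}` of `k`. -/
def P2F4 (k : Type*) [Field k] (ω : k) : Set (Projectivization k (Fin 3 → k)) :=
  {P | ∃ v : Fin 3 → k, (∀ i, v i ∈ ({0, 1, ω, ω + 1} : Set k)) ∧
    ∃ hv : v ≠ 0, P = Projectivization.mk k v hv}

/-- The stabilizer of a subset `Z ⊆ P²(k)` in `PGL(3,k)`: the elements of `PGL(3,k)` all of
whose lifts to `GL(3,k)` map `Z` onto itself. -/
def PGLstab (k : Type*) [Field k] (Z : Set (Projectivization k (Fin 3 → k))) : Set (PGL3 k) :=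
  {x | ∀ g : Matrix.GeneralLinearGroup (Fin 3) k, QuotientGroup.mk g = x → actGL k g '' Z = Z}


/-! The set `{0, 1, ω, ω + 1}` is a subfield of `k`: it is the fixed field of `x ↦ x⁴`, because
`x⁴ - x = x (x + 1) (x + ω) (x + ω + 1)` in characteristic 2. For any subfield `F` of `k`, the
matrices over `F` form a subgroup of `GL(n, k)` mapping `ℙ(Fⁿ)` into itself, hence onto itself.
Conversely, if `g` maps `ℙ(Fⁿ)` into itself, then `g eⱼ = cⱼ vⱼ` and `g (1, …, 1) = c w` with
`vⱼ, w` over `F`. Solving `w = Σ aⱼ vⱼ` over `F` and comparing with `g (1, …, 1) = Σ cⱼ vⱼ`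
gives `cⱼ = c aⱼ`, so `g` is `c` times the matrix over `F` with columns `aⱼ vⱼ`. -/

open Projectivization Matrix
open scoped LinearAlgebra.Projectivization MatrixGroups Pointwise

section F4

variable {k : Type*} [Field k] [CharP k 2] {ω : k}

theorem pow_four_eq_self_iff (hω : ω ^ 2 + ω + 1 = 0) {x : k} :
    x ^ 4 = x ↔ x ∈ ({0, 1, ω, ω + 1} : Set k) := by
  have hfactor : x ^ 4 - x = x * (x + 1) * (x + ω) * (x + (ω + 1)) := by
    linear_combination
      -(x ^ 2 + x) * hω - (x ^ 3 + ω * x ^ 3 + ω * x ^ 2) * (CharTwo.two_eq_zero : (2 : k) = 0)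
  rw [← sub_eq_zero, hfactor]
  simp only [mul_eq_zero, CharTwo.add_eq_zero, Set.mem_insert_iff, Set.mem_singleton_iff, or_assoc]

def subfieldF4 (hω : ω ^ 2 + ω + 1 = 0) : Subfield k :=
  ((iterateFrobenius k 2 2).eqLocusField (RingHom.id k)).copy {0, 1, ω, ω + 1}
    (Set.ext fun _ => (pow_four_eq_self_iff hω).symm)

end F4

theorem Matrix.mulVec_mem {R S m n : Type*} [Fintype n] [NonAssocSemiring R] [SetLike S R]
    [SubsemiringClass S R] {s : S} {M : Matrix m n R} {v : n → R} (hM : ∀ i j, M i j ∈ s)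
    (hv : ∀ j, v j ∈ s) (i : m) : (M *ᵥ v) i ∈ s :=
  sum_mem fun j _ => mul_mem (hM i j) (hv j)

def rationalPoints {k : Type*} [Field k] (F : Subfield k) (n : Type*) : Set (ℙ k (n → k)) :=
  {P | ∃ v : n → k, (∀ i, v i ∈ F) ∧ ∃ hv : v ≠ 0, P = mk k v hv}

section RationalPoints

variable {k : Type*} [Field k] {n : Type*} [Fintype n] [DecidableEq n] {F : Subfield k}

theorem Matrix.GeneralLinearGroup.mem_range_map_subtype_iff {g : GL n k} :
    g ∈ (map F.subtype).range ↔ ∀ i j, g i j ∈ F := by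
  refine ⟨by rintro ⟨h, rfl⟩ i j; exact (h i j).2, fun hg => ?_⟩
  let M : Matrix n n F := of fun i j => ⟨g i j, hg i j⟩
  have hdet : M.det ≠ 0 := fun h0 => (GeneralLinearGroup.det g).ne_zero <|
    (RingHom.map_det F.subtype M).symm.trans (by rw [h0, map_zero])
  exact ⟨mkOfDetNeZero M hdet, Units.ext rfl⟩

theorem smul_rationalPoints_subset {g : GL n k}
    (hg : g ∈ (GeneralLinearGroup.map F.subtype).range) :
    g • rationalPoints F n ⊆ rationalPoints F n := by
  rintro _ ⟨_, ⟨v, hvF, hv, rfl⟩, rfl⟩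
  exact ⟨g • v, mulVec_mem (GeneralLinearGroup.mem_range_map_subtype_iff.1 hg) hvF, _,
    smul_mk g hv⟩

theorem smul_rationalPoints_of_mem_range {g : GL n k}
    (hg : g ∈ (GeneralLinearGroup.map F.subtype).range) :
    g • rationalPoints F n = rationalPoints F n :=
  (smul_rationalPoints_subset hg).antisymm
    (Set.subset_smul_set_iff.2 (smul_rationalPoints_subset (inv_mem hg)))

theorem exists_smul_eq_of_smul_rationalPoints_subset {g : GL n k}
    (hg : g • rationalPoints F n ⊆ rationalPoints F n) {v : n → k} (hv : v ≠ 0)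
    (hvF : ∀ i, v i ∈ F) : ∃ c : kˣ, ∃ w : n → k, (∀ i, w i ∈ F) ∧ g • v = c • w := by
  obtain ⟨w, hwF, hw, hvw⟩ := hg (Set.smul_mem_smul_set (a := g) ⟨v, hvF, hv, rfl⟩)
  rw [smul_mk, mk_eq_mk_iff] at hvw
  obtain ⟨c, hc⟩ := hvw
  exact ⟨c, w, hwF, hc.symm⟩

theorem exists_mulVec_eq_of_mem {V : Matrix n n k} (hV : ∀ i j, V i j ∈ F) (hdet : V.det ≠ 0)
    {w : n → k} (hw : ∀ i, w i ∈ F) : ∃ a : n → k, (∀ i, a i ∈ F) ∧ V *ᵥ a = w := by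
  let G := GeneralLinearGroup.mkOfDetNeZero V hdet
  have hG : G⁻¹ ∈ (GeneralLinearGroup.map F.subtype).range :=
    inv_mem (GeneralLinearGroup.mem_range_map_subtype_iff.2 hV)
  refine ⟨G⁻¹.val *ᵥ w, mulVec_mem (GeneralLinearGroup.mem_range_map_subtype_iff.1 hG) hw, ?_⟩
  rw [mulVec_mulVec, show V * G⁻¹.val = 1 from G.mul_inv, one_mulVec]

theorem exists_mul_scalar_mem_range_of_smul_rationalPoints_subset [Nonempty n] {g : GL n k}
    (hg : g • rationalPoints F n ⊆ rationalPoints F n) :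
    ∃ u : kˣ, g * GeneralLinearGroup.scalar n u ∈ (GeneralLinearGroup.map F.subtype).range := by
  have hsingle (j : n) : ∀ i, Pi.single (M := fun _ => k) j 1 i ∈ F := fun i => by
    rw [Pi.single_apply]
    split_ifs
    exacts [F.one_mem, F.zero_mem]
  choose c v hvF hcv using fun j : n =>
    exists_smul_eq_of_smul_rationalPoints_subset hg (Pi.single_ne_zero_iff.2 one_ne_zero)
      (hsingle j)
  obtain ⟨c₀, w, hwF, hcw⟩ :=
    exists_smul_eq_of_smul_rationalPoints_subset hg one_ne_zero fun _ => F.one_mem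
  let V : Matrix n n k := of fun i j => v j i
  have hgV : g.val = V * diagonal fun j => (c j : k) := by
    ext i j
    have := congrFun (hcv j) i
    rw [Units.smul_def, smul_eq_mulVec, mulVec_single_one] at this
    simpa [V, mul_comm, Units.smul_def] using this
  have hdet : V.det ≠ 0 := by
    intro h0
    apply (GeneralLinearGroup.det g).ne_zero
    simp [hgV, h0]
  obtain ⟨a, haF, hVa⟩ := exists_mulVec_eq_of_mem (V := V) (fun i j => hvF j i) hdet hwF
  have hca : (fun j => (c j : k)) = (c₀ : k) • a := by
    apply mulVec_injective_of_det_ne_zero hdet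
    have hdiag : (diagonal fun j => (c j : k)) *ᵥ 1 = fun j => (c j : k) := by
      ext j; simp [mulVec_diagonal]
    rw [mulVec_smul, hVa, ← Units.smul_def, ← hcw, Units.smul_def, smul_eq_mulVec, hgV,
      ← mulVec_mulVec, hdiag]
  refine ⟨c₀⁻¹, GeneralLinearGroup.mem_range_map_subtype_iff.2 fun i j => ?_⟩
  have hentry : (g * GeneralLinearGroup.scalar n c₀⁻¹ : GL n k) i j = v j i * a j := by
    simp only [Units.val_mul, GeneralLinearGroup.coe_scalar, scalar_apply, mul_diagonal, hgV, hca,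
      V, of_apply, Pi.smul_apply, smul_eq_mul, Units.val_inv_eq_inv_val]
    field_simp
  rw [hentry]
  exact F.mul_mem (hvF j i) (haF j)

theorem Projectivization.PGL.mk_smul_set (g : GL n k) (Z : Set (ℙ k (n → k))) :
    (ProjGenLinGroup.mk g : PGL(n, k)) • Z = g • Z :=
  Set.image_congr fun P _ => ProjGenLinGroup.mk_smul _ g P

theorem stabilizer_rationalPoints [Nonempty n] :
    MulAction.stabilizer PGL(n, k) (rationalPoints F n) =
      (GeneralLinearGroup.map F.subtype).range.map ProjGenLinGroup.mk := by
  ext x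
  constructor
  · intro hx
    obtain ⟨g, rfl⟩ := ProjGenLinGroup.mk_surjective x
    rw [MulAction.mem_stabilizer_iff, PGL.mk_smul_set] at hx
    obtain ⟨u, hu⟩ := exists_mul_scalar_mem_range_of_smul_rationalPoints_subset hx.subset
    exact ⟨_, hu, by rw [map_mul, ProjGenLinGroup.mk_scalar, mul_one]⟩
  · rintro ⟨h, hh, rfl⟩
    rw [MulAction.mem_stabilizer_iff, PGL.mk_smul_set]
    exact smul_rationalPoints_of_mem_range hh

end RationalPoints

theorem actGL_eq_smul {k : Type*} [Field k] (g : GL (Fin 3) k) : actGL k g = (g • ·) := by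
  funext P
  induction P using Projectivization.ind with | h v hv => ?_
  rw [smul_mk, actGL, mk_eq_mk_iff]
  obtain ⟨a, ha⟩ := exists_smul_eq_mk_rep k v hv
  exact ⟨a, by rw [← ha]; exact smul_comm a g v⟩

theorem PGLstab_eq_stabilizer {k : Type*} [Field k] (Z : Set (ℙ k (Fin 3 → k))) :
    PGLstab k Z = (MulAction.stabilizer PGL(3, k) Z : Set PGL(3, k)) := by
  ext x
  -- `PGL3 k` and `PGL(3, k)` are the same quotient `GL(3, k) ⧸ center`
  change (∀ g, (QuotientGroup.mk g : PGL3 k) = x → actGL k g '' Z = Z) ↔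
    (show PGL(3, k) from x) • Z = Z
  simp only [actGL_eq_smul, Set.image_smul]
  constructor
  · intro h
    obtain ⟨g, rfl⟩ := QuotientGroup.mk_surjective x
    exact (PGL.mk_smul_set g Z).trans (h g rfl)
  · rintro h g rfl
    exact (PGL.mk_smul_set g Z).symm.trans h

theorem stabilizer_P2F4_general (k : Type*) [Field k] [CharP k 2]
    (ω : k) (hω : ω ^ 2 + ω + 1 = 0) :
    PGLstab k (P2F4 k ω) =
      {x : PGL3 k | ∃ g : Matrix.GeneralLinearGroup (Fin 3) k,
        (∀ i j : Fin 3, (g : Matrix (Fin 3) (Fin 3) k) i j ∈ ({0, 1, ω, ω + 1} : Set k)) ∧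
        QuotientGroup.mk g = x} := by
  rw [PGLstab_eq_stabilizer, show P2F4 k ω = rationalPoints (subfieldF4 hω) (Fin 3) from rfl,
    stabilizer_rationalPoints]
  ext x
  simp only [SetLike.mem_coe, Subgroup.mem_map, GeneralLinearGroup.mem_range_map_subtype_iff]
  rfl

/-- the stabilizer in `PGL(3,k)` of the 21-point set `P²(F₄)` is the image in
`PGL(3,k)` of `GL(3,F₄)`, i.e. of the invertible matrices all of whose entries lie in the
subfield `F₄ = {0, 1, ω, ω+1}` of `k`. -/
theorem stabilizer_P2F4 (k : Type*) [Field k] [IsAlgClosed k] [CharP k 2]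
    (ω : k) (hω : ω ^ 2 + ω + 1 = 0) :
    PGLstab k (P2F4 k ω) =
      {x : PGL3 k | ∃ g : Matrix.GeneralLinearGroup (Fin 3) k,
        (∀ i j : Fin 3, (g : Matrix (Fin 3) (Fin 3) k) i j ∈ ({0, 1, ω, ω + 1} : Set k)) ∧
        QuotientGroup.mk g = x} :=
  stabilizer_P2F4_general k ω hω
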